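/- arXiv:2408.03432 — 14 statements merged into one kernel-verified Lean document; each statement's English description precedes it below -/
import Mathlib

section
/- Let L be a lattice with a least element 0 and a unary operation ', and let ⊙ and → denote the Sasaki operations on L. If ⊙ and → satisfy condition (A2), then L satisfies the identity x ∧ x' = 0. -/
/-- In a lattice with bottom element `⊥` and unary operation `c`,
if the Sasaki operations satisfy condition (A2), then `x ⊓ c x = ⊥` for all `x`. -/
theorem sasaki_stmt_2 {L : Type*} [Lattice L] [OrderBot L] (c : L → L)
    (A2 : ∀ x y z : L, x ≤ c y ⊔ (y ⊓ z) → (x ⊔ c y) ⊓ y ≤ z) :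
    ∀ x : L, x ⊓ c x = ⊥ := by
  intro x
  have h := A2 (c x) x ⊥ le_sup_left
  rw [sup_idem, inf_comm] at h
  exact le_bot_iff.mp h
end

section
/- Let L be a bounded lattice (with least element 0 and greatest element 1) with a unary operation ', and let ⊙ and → denote the Sasaki operations on L. If ⊙ and → form an adjoint pair, then ' is a complementation on L, i.e. x ∨ x' = 1 and x ∧ x' = 0 for all x. -/
section

variable {L : Type*} [Lattice L]

/-- The Sasaki operations `x ⊙ y = (x ⊔ c y) ⊓ y` and `y → z = c y ⊔ (y ⊓ z)` form an
adjoint pair. -/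
def SasakiAdjoint (c : L → L) : Prop :=
  ∀ x y z : L, (x ⊔ c y) ⊓ y ≤ z ↔ x ≤ c y ⊔ (y ⊓ z)

namespace SasakiAdjoint

variable {c : L → L}

/-- `⊤ ⊙ x = x`, so adjointness gives `⊤ ≤ x → x = c x ⊔ x`. -/
theorem sup_self_eq_top [OrderTop L] (adj : SasakiAdjoint c) (x : L) : x ⊔ c x = ⊤ := by
  have h : ⊤ ≤ c x ⊔ (x ⊓ x) := (adj ⊤ x x).mp inf_le_right
  rw [inf_idem, sup_comm] at h
  exact top_le_iff.mp h

/-- `c x ≤ c x ⊔ (x ⊓ ⊥) = x → ⊥`, so adjointness gives `c x ⊙ x = c x ⊓ x ≤ ⊥`. -/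
theorem inf_self_eq_bot [OrderBot L] (adj : SasakiAdjoint c) (x : L) : x ⊓ c x = ⊥ := by
  have h : (c x ⊔ c x) ⊓ x ≤ ⊥ := (adj (c x) x ⊥).mpr le_sup_left
  rw [sup_idem, inf_comm] at h
  exact le_bot_iff.mp h

end SasakiAdjoint

end

/-- In a bounded lattice with unary operation `c`, if the Sasaki
operations form an adjoint pair then `c` is a complementation. -/
theorem sasaki_stmt_3 {L : Type*} [Lattice L] [BoundedOrder L] (c : L → L)
    (adj : ∀ x y z : L, (x ⊔ c y) ⊓ y ≤ z ↔ x ≤ c y ⊔ (y ⊓ z)) :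
    ∀ x : L, x ⊔ c x = ⊤ ∧ x ⊓ c x = ⊥ := fun x =>
  ⟨SasakiAdjoint.sup_self_eq_top adj x, SasakiAdjoint.inf_self_eq_bot adj x⟩
end

section
/- Let L be a lattice with a unary operation ' satisfying identity (B1), and let ⊙ and → denote the Sasaki operations on L. Then ⊙ and → satisfy condition (A1): for all x,y,z, x ⊙ y ≤ z implies x ≤ y → z. -/
/-- In a lattice with unary operation `c` satisfying identity (B1)
(`c y ⊔ ((x ⊔ c y) ⊓ y) = x ⊔ c y`), the Sasaki operations satisfy condition (A1). -/
theorem sasaki_stmt_4 {L : Type*} [Lattice L] (c : L → L)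
    (B1 : ∀ x y : L, c y ⊔ ((x ⊔ c y) ⊓ y) = x ⊔ c y) :
    ∀ x y z : L, (x ⊔ c y) ⊓ y ≤ z → x ≤ c y ⊔ (y ⊓ z) := by
  intro x y z h
  calc x ≤ x ⊔ c y := le_sup_left
    _ = c y ⊔ ((x ⊔ c y) ⊓ y) := (B1 x y).symm
    _ ≤ c y ⊔ (y ⊓ z) := sup_le_sup_left (le_inf inf_le_right h) _
end

section
/- Let L be a lattice with a unary operation ' satisfying identity (B2), and let ⊙ and → denote the Sasaki operations on L. Then ⊙ and → satisfy condition (A2): for all x,y,z, x ≤ y → z implies x ⊙ y ≤ z. -/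
/-- In a lattice with unary operation `c` satisfying identity (B2)
(`(c x ⊔ (x ⊓ y)) ⊓ x = x ⊓ y`), the Sasaki operations satisfy condition (A2). -/
theorem sasaki_stmt_5 {L : Type*} [Lattice L] (c : L → L)
    (B2 : ∀ x y : L, (c x ⊔ (x ⊓ y)) ⊓ x = x ⊓ y) :
    ∀ x y z : L, x ≤ c y ⊔ (y ⊓ z) → (x ⊔ c y) ⊓ y ≤ z := by
  intro x y z h
  calc (x ⊔ c y) ⊓ y ≤ (c y ⊔ (y ⊓ z)) ⊓ y := inf_le_inf_right y (sup_le h le_sup_left)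
    _ = y ⊓ z := B2 y z
    _ ≤ z := inf_le_right
end

section
/- Let L be a lattice with a unary operation ' satisfying both identities (B1) and (B2), and let ⊙ and → denote the Sasaki operations on L. Then ⊙ and → form an adjoint pair: for all x,y,z, x ⊙ y ≤ z if and only if x ≤ y → z. -/
/-!
Both Sasaki maps are monotone, so it suffices to check the unit and counit of the adjunction
`(· ⊙ y) ⊣ (y → ·)`. (B1) gives the unit: `x ≤ x ∨ y' = y' ∨ (x ⊙ y) = y → (x ⊙ y)`, because
`x ⊙ y ≤ y`. (B2) gives the counit: `(y → z) ⊙ y = (y' ∨ (y ∧ z)) ∧ y = y ∧ z ≤ z`.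
-/

namespace Sasaki

variable {L : Type*} [Lattice L] (c : L → L)

/-- `mul c x y` and `imp c x y` are the paper's `x ⊙ y` and `x → y`, with `c` for `'`. -/
def mul (x y : L) : L := (x ⊔ c y) ⊓ y

def imp (x y : L) : L := c x ⊔ (x ⊓ y)

variable {c}

theorem mul_le_right (x y : L) : mul c x y ≤ y := inf_le_right

theorem imp_monotone (y : L) : Monotone (imp c y) := fun _ _ h =>
  sup_le_sup_left (inf_le_inf_left y h) _

theorem le_imp_mul (B1 : ∀ x y : L, c y ⊔ ((x ⊔ c y) ⊓ y) = x ⊔ c y) (x y : L) :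
    x ≤ imp c y (mul c x y) :=
  calc x ≤ x ⊔ c y := le_sup_left
    _ = c y ⊔ (y ⊓ mul c x y) := by rw [inf_eq_right.mpr (mul_le_right x y), mul, B1]

theorem mul_imp_le (B2 : ∀ x y : L, (c x ⊔ (x ⊓ y)) ⊓ x = x ⊓ y) (y z : L) :
    mul c (imp c y z) y ≤ z :=
  calc mul c (imp c y z) y = (c y ⊔ (y ⊓ z)) ⊓ y := by
        rw [mul, imp, sup_eq_left.mpr (le_sup_left : c y ≤ c y ⊔ (y ⊓ z))]
    _ = y ⊓ z := B2 y z
    _ ≤ z := inf_le_right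

theorem mul_monotone (y : L) : Monotone (mul c · y) := fun _ _ h =>
  inf_le_inf_right y (sup_le_sup_right h _)

theorem galoisConnection (B1 : ∀ x y : L, c y ⊔ ((x ⊔ c y) ⊓ y) = x ⊔ c y)
    (B2 : ∀ x y : L, (c x ⊔ (x ⊓ y)) ⊓ x = x ⊓ y) (y : L) :
    GaloisConnection (mul c · y) (imp c y) :=
  GaloisConnection.monotone_intro (imp_monotone y) (mul_monotone y)
    (fun x => le_imp_mul B1 x y) (mul_imp_le B2 y)

end Sasaki

/-- In a lattice with unary operation `c` satisfying identities (B1)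
and (B2), the Sasaki operations form an adjoint pair. -/
theorem sasaki_stmt_6 {L : Type*} [Lattice L] (c : L → L)
    (B1 : ∀ x y : L, c y ⊔ ((x ⊔ c y) ⊓ y) = x ⊔ c y)
    (B2 : ∀ x y : L, (c x ⊔ (x ⊓ y)) ⊓ x = x ⊓ y) :
    ∀ x y z : L, (x ⊔ c y) ⊓ y ≤ z ↔ x ≤ c y ⊔ (y ⊓ z) :=
  fun x y z => Sasaki.galoisConnection B1 B2 y x z
end

section
/- Let L be a modular lattice with a greatest element 1 and a unary operation ' satisfying the identity x ∨ x' = 1. Then L satisfies identity (B1), and hence the Sasaki operations ⊙ and → on L satisfy condition (A1): for all x,y,z, x ⊙ y ≤ z implies x ≤ y → z. -/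
section Sasaki

variable {L : Type*} [Lattice L] (c : L → L)

def sasakiProd (x y : L) : L := (x ⊔ c y) ⊓ y

def sasakiImp (x y : L) : L := c x ⊔ (x ⊓ y)

theorem le_sasakiImp_of_sasakiProd_le {x y z : L}
    (hB1 : c y ⊔ sasakiProd c x y = x ⊔ c y) (h : sasakiProd c x y ≤ z) :
    x ≤ sasakiImp c y z :=
  calc x ≤ x ⊔ c y := le_sup_left
    _ = c y ⊔ sasakiProd c x y := hB1.symm
    _ ≤ c y ⊔ (y ⊓ z) := sup_le_sup_left (le_inf inf_le_right h) _

end Sasaki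

theorem sup_inf_eq_of_le_of_sup_eq_top {L : Type*} [Lattice L] [OrderTop L] [IsModularLattice L]
    {a b y : L} (hab : a ≤ b) (hay : a ⊔ y = ⊤) : a ⊔ b ⊓ y = b := by
  rw [inf_comm, ← sup_inf_assoc_of_le y hab, hay, top_inf_eq]

theorem sup_sasakiProd_eq {L : Type*} [Lattice L] [OrderTop L] [IsModularLattice L]
    (c : L → L) (x : L) {y : L} (hy : y ⊔ c y = ⊤) :
    c y ⊔ sasakiProd c x y = x ⊔ c y :=
  sup_inf_eq_of_le_of_sup_eq_top le_sup_right (by rwa [sup_comm])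

/-- A modular lattice with top element `⊤` and a unary operation `c`
satisfying `x ⊔ c x = ⊤` satisfies identity (B1); hence the Sasaki operations
satisfy condition (A1). -/
theorem sasaki_stmt_7 {L : Type*} [Lattice L] [OrderTop L] (c : L → L)
    (modular : ∀ x y z : L, x ≤ z → x ⊔ (y ⊓ z) = (x ⊔ y) ⊓ z)
    (compl_sup : ∀ x : L, x ⊔ c x = ⊤) :
    (∀ x y : L, c y ⊔ ((x ⊔ c y) ⊓ y) = x ⊔ c y) ∧
      (∀ x y z : L, (x ⊔ c y) ⊓ y ≤ z → x ≤ c y ⊔ (y ⊓ z)) := by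
  have : IsModularLattice L := ⟨@fun x y z h => (modular x y z h).ge⟩
  have hB1 (x y : L) : c y ⊔ sasakiProd c x y = x ⊔ c y := sup_sasakiProd_eq c x (compl_sup y)
  exact ⟨hB1, fun x y _ => le_sasakiImp_of_sasakiProd_le c (hB1 x y)⟩
end

section
/- Let L be a bounded modular lattice with a unary operation ' that is a complementation (i.e. x ∨ x' = 1 and x ∧ x' = 0 for all x). Then the Sasaki operations ⊙ and → on L form an adjoint pair: for all x,y,z, x ⊙ y ≤ z if and only if x ≤ y → z. -/
/-! For a complement `a` of `y`, the Sasaki product `x ↦ (x ⊔ a) ⊓ y` and the Sasaki implication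
`z ↦ a ⊔ y ⊓ z` are monotone, and modularity gives both triangle inequalities of an adjunction:
`a ⊔ y ⊓ (x ⊔ a)` equals `x ⊔ a ≥ x` because `y ⊔ a = ⊤`, and `(y ⊓ z ⊔ a) ⊓ y` collapses
to `y ⊓ z ≤ z` because `y ⊓ a = ⊥`. -/

theorem IsModularLattice.of_sup_inf_eq {L : Type*} [Lattice L]
    (modular : ∀ x y z : L, x ≤ z → x ⊔ (y ⊓ z) = (x ⊔ y) ⊓ z) : IsModularLattice L where
  sup_inf_le_assoc_of_le y _ h := (modular _ y _ h).ge

section Sasaki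

variable {L : Type*} [Lattice L] [IsModularLattice L] {a y : L}

theorem le_sup_inf_sup_inf_of_codisjoint [OrderTop L] (h : Codisjoint y a) (x : L) :
    x ≤ a ⊔ y ⊓ ((x ⊔ a) ⊓ y) := by
  rw [inf_of_le_right inf_le_right, inf_comm, ← sup_inf_assoc_of_le y le_sup_right, sup_comm,
    h.eq_top, top_inf_eq]
  exact le_sup_left

theorem sup_inf_sup_inf_le_of_disjoint [OrderBot L] (h : Disjoint y a) (z : L) :
    (a ⊔ y ⊓ z ⊔ a) ⊓ y ≤ z := by
  rw [sup_comm a, sup_assoc, sup_idem, sup_inf_assoc_of_le a inf_le_left, inf_comm a,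
    h.eq_bot, sup_bot_eq]
  exact inf_le_right

theorem gc_sasaki [BoundedOrder L] (h : IsCompl y a) :
    GaloisConnection (fun x => (x ⊔ a) ⊓ y) (fun z => a ⊔ y ⊓ z) :=
  GaloisConnection.monotone_intro (fun _ _ hz => sup_le_sup_left (inf_le_inf_left y hz) a)
    (fun _ _ hx => inf_le_inf_right y (sup_le_sup_right hx a))
    (le_sup_inf_sup_inf_of_codisjoint h.codisjoint) (sup_inf_sup_inf_le_of_disjoint h.disjoint)

end Sasaki

/-- In a bounded modular lattice with a complementation `c`,
the Sasaki operations form an adjoint pair. -/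
theorem sasaki_stmt_9 {L : Type*} [Lattice L] [BoundedOrder L] (c : L → L)
    (modular : ∀ x y z : L, x ≤ z → x ⊔ (y ⊓ z) = (x ⊔ y) ⊓ z)
    (compl_sup : ∀ x : L, x ⊔ c x = ⊤) (compl_inf : ∀ x : L, x ⊓ c x = ⊥) :
    ∀ x y z : L, (x ⊔ c y) ⊓ y ≤ z ↔ x ≤ c y ⊔ (y ⊓ z) := by
  have := IsModularLattice.of_sup_inf_eq modular
  intro x y z
  exact gc_sasaki (IsCompl.of_eq (compl_inf y) (compl_sup y)) x z
end

section
/- Let L be a weakly orthomodular lattice whose unary operation ' is an involution (x'' = x for all x). Then L satisfies identity (B1), and hence the Sasaki operations ⊙ and → on L satisfy condition (A1): for all x,y,z, x ⊙ y ≤ z implies x ≤ y → z. -/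
/-! Weak orthomodularity applied to the pair `x ⊔ y'`, `y'` (whose meet is `y'`) gives
`x ⊔ y' = y' ⊔ ((x ⊔ y') ⊓ y'')`, which is (B1) once `y'' = y`. By (B1), `x` lies below
`y' ⊔ (x ⊙ y)`, and monotonicity in the Sasaki product turns `x ⊙ y ≤ z` into
`x ≤ y' ⊔ (y ⊓ z) = y → z`. -/

namespace WeaklyOrthomodular

variable {L : Type*} [Lattice L] (c : L → L)

theorem compl_sup_sasakiProduct_eq
    (wom : ∀ x y : L, x = (x ⊓ y) ⊔ (x ⊓ c (x ⊓ y))) (invol : ∀ x : L, c (c x) = x)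
    (x y : L) : c y ⊔ ((x ⊔ c y) ⊓ y) = x ⊔ c y := by
  have h := wom (x ⊔ c y) (c y)
  rw [inf_eq_right.mpr le_sup_right, invol] at h
  exact h.symm

theorem le_sasakiImp_of_sasakiProduct_le
    (B1 : ∀ x y : L, c y ⊔ ((x ⊔ c y) ⊓ y) = x ⊔ c y) {x y z : L}
    (hz : (x ⊔ c y) ⊓ y ≤ z) : x ≤ c y ⊔ (y ⊓ z) :=
  calc x ≤ x ⊔ c y := le_sup_left
    _ = c y ⊔ ((x ⊔ c y) ⊓ y) := (B1 x y).symm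
    _ ≤ c y ⊔ (y ⊓ z) := sup_le_sup_left (le_inf inf_le_right hz) _

end WeaklyOrthomodular

/-- A weakly orthomodular lattice (`x = (x ⊓ y) ⊔ (x ⊓ c (x ⊓ y))`)
whose unary operation `c` is an involution satisfies identity (B1); hence the
Sasaki operations satisfy condition (A1). -/
theorem sasaki_stmt_10 {L : Type*} [Lattice L] (c : L → L)
    (wom : ∀ x y : L, x = (x ⊓ y) ⊔ (x ⊓ c (x ⊓ y)))
    (invol : ∀ x : L, c (c x) = x) :
    (∀ x y : L, c y ⊔ ((x ⊔ c y) ⊓ y) = x ⊔ c y) ∧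
      (∀ x y z : L, (x ⊔ c y) ⊓ y ≤ z → x ≤ c y ⊔ (y ⊓ z)) := by
  have B1 := WeaklyOrthomodular.compl_sup_sasakiProduct_eq c wom invol
  exact ⟨B1, fun _ _ _ => WeaklyOrthomodular.le_sasakiImp_of_sasakiProduct_le c B1⟩
end

section
/- Let L be a dually weakly orthomodular lattice with unary operation '. Then L satisfies identity (B2), and hence the Sasaki operations ⊙ and → on L satisfy condition (A2): for all x,y,z, x ≤ y → z implies x ⊙ y ≤ z. -/
section Sasaki

variable {L : Type*} [Lattice L] (c : L → L)

/-- The Sasaki product `x ⊙ y`. -/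
def sasakiAnd (x y : L) : L := (x ⊔ c y) ⊓ y

variable {c}

/-- Identity (B2) at `x, y`. -/
theorem sasakiImp_inf_self_of_dual_weak_orthomodular {x y : L}
    (h : x ⊓ y = (x ⊓ y ⊔ x) ⊓ (x ⊓ y ⊔ c (x ⊓ y ⊔ x))) :
    sasakiImp c x y ⊓ x = x ⊓ y := by
  rw [sup_eq_right.mpr inf_le_left] at h
  rw [sasakiImp, inf_comm, sup_comm, ← h]

theorem sasakiAnd_le_of_le_sasakiImp {x y z : L} (hB2 : sasakiImp c y z ⊓ y = y ⊓ z)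
    (hx : x ≤ sasakiImp c y z) : sasakiAnd c x y ≤ z :=
  calc sasakiAnd c x y ≤ sasakiImp c y z ⊓ y := inf_le_inf_right y (sup_le hx le_sup_left)
    _ = y ⊓ z := hB2
    _ ≤ z := inf_le_right

end Sasaki

/-- A dually weakly orthomodular lattice (`x = (x ⊔ y) ⊓ (x ⊔ c (x ⊔ y))`)
satisfies identity (B2); hence the Sasaki operations satisfy condition (A2). -/
theorem sasaki_stmt_11 {L : Type*} [Lattice L] (c : L → L)
    (dwom : ∀ x y : L, x = (x ⊔ y) ⊓ (x ⊔ c (x ⊔ y))) :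
    (∀ x y : L, (c x ⊔ (x ⊓ y)) ⊓ x = x ⊓ y) ∧
      (∀ x y z : L, x ≤ c y ⊔ (y ⊓ z) → (x ⊔ c y) ⊓ y ≤ z) := by
  have hB2 (x y : L) : sasakiImp c x y ⊓ x = x ⊓ y :=
    sasakiImp_inf_self_of_dual_weak_orthomodular (dwom (x ⊓ y) x)
  exact ⟨hB2, fun x y z => sasakiAnd_le_of_le_sasakiImp (hB2 y z)⟩
end

section
/- Let L be an orthomodular lattice. Then the Sasaki operations ⊙ and → on L form an adjoint pair: for all x,y,z, x ⊙ y ≤ z if and only if x ≤ y → z. -/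
/-!
The implication `x ≤ y → z` only needs the orthomodular law in the form
`c y ⊔ ((c y ⊔ x) ⊓ y) = c y ⊔ x`. The converse needs its dual
`y ⊓ (c y ⊔ p) = p` for `p ≤ y`, which `c` transports from the law itself because an
antitone involution exchanges `⊔` and `⊓`.
-/

section AntitoneInvolution

variable {L : Type*} [Lattice L] {c : L → L}

theorem le_apply_iff_le_apply (hinv : Function.Involutive c) (hanti : Antitone c) {a b : L} :
    a ≤ c b ↔ b ≤ c a :=
  ⟨fun h => (hinv b).ge.trans (hanti h), fun h => (hinv a).ge.trans (hanti h)⟩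

theorem apply_sup_eq_inf (hinv : Function.Involutive c) (hanti : Antitone c) (a b : L) :
    c (a ⊔ b) = c a ⊓ c b :=
  le_antisymm (le_inf (hanti le_sup_left) (hanti le_sup_right)) <|
    (le_apply_iff_le_apply hinv hanti).2 <|
      sup_le ((le_apply_iff_le_apply hinv hanti).2 inf_le_left)
        ((le_apply_iff_le_apply hinv hanti).2 inf_le_right)

theorem apply_inf_eq_sup (hinv : Function.Involutive c) (hanti : Antitone c) (a b : L) :
    c (a ⊓ b) = c a ⊔ c b := by
  conv_lhs => rw [← hinv a, ← hinv b]
  rw [← apply_sup_eq_inf hinv hanti, hinv]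

theorem inf_apply_sup_eq_of_le (hinv : Function.Involutive c) (hanti : Antitone c)
    (hom : ∀ x y : L, x ⊔ ((x ⊔ y) ⊓ c x) = x ⊔ y) {p q : L} (hpq : p ≤ q) :
    q ⊓ (c q ⊔ p) = p := by
  apply hinv.injective
  have h := hom (c q) (c p)
  rw [sup_eq_right.2 (hanti hpq), hinv q, inf_comm] at h
  rw [apply_inf_eq_sup hinv hanti, apply_sup_eq_inf hinv hanti, hinv q, h]

theorem galoisConnection_sasaki (hinv : Function.Involutive c) (hanti : Antitone c)
    (hom : ∀ x y : L, x ⊔ ((x ⊔ y) ⊓ c x) = x ⊔ y) (y : L) :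
    GaloisConnection (fun x => (x ⊔ c y) ⊓ y) (fun z => c y ⊔ (y ⊓ z)) := by
  intro x z
  constructor
  · intro h
    have hx : c y ⊔ ((c y ⊔ x) ⊓ y) = c y ⊔ x := by simpa only [hinv y] using hom (c y) x
    calc x ≤ c y ⊔ x := le_sup_right
      _ = c y ⊔ ((x ⊔ c y) ⊓ y) := by rw [sup_comm x, hx]
      _ ≤ c y ⊔ (y ⊓ z) := sup_le_sup_left (le_inf inf_le_right h) _
  · intro h
    calc (x ⊔ c y) ⊓ y ≤ (c y ⊔ (y ⊓ z)) ⊓ y := inf_le_inf_right _ (sup_le h le_sup_left)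
      _ = y ⊓ z := by rw [inf_comm, inf_apply_sup_eq_of_le hinv hanti hom inf_le_left]
      _ ≤ z := inf_le_right

end AntitoneInvolution

theorem sasaki_stmt_12_general {L : Type*} [Lattice L] (c : L → L)
    (invol : ∀ x : L, c (c x) = x) (antitone : ∀ x y : L, x ≤ y → c y ≤ c x)
    (om : ∀ x y : L, x ⊔ ((x ⊔ y) ⊓ c x) = x ⊔ y) :
    ∀ x y z : L, (x ⊔ c y) ⊓ y ≤ z ↔ x ≤ c y ⊔ (y ⊓ z) :=
  fun x y z => galoisConnection_sasaki invol (fun a b => antitone a b) om y x z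

/-- In an orthomodular lattice (a bounded lattice with a
complementation `c` that is an antitone involution satisfying the orthomodular
law), the Sasaki operations form an adjoint pair. -/
theorem sasaki_stmt_12 {L : Type*} [Lattice L] [BoundedOrder L] (c : L → L)
    (compl_sup : ∀ x : L, x ⊔ c x = ⊤) (compl_inf : ∀ x : L, x ⊓ c x = ⊥)
    (invol : ∀ x : L, c (c x) = x) (antitone : ∀ x y : L, x ≤ y → c y ≤ c x)
    (om : ∀ x y : L, x ⊔ ((x ⊔ y) ⊓ c x) = x ⊔ y) :
    ∀ x y z : L, (x ⊔ c y) ⊓ y ≤ z ↔ x ≤ c y ⊔ (y ⊓ z) :=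
  sasaki_stmt_12_general c invol antitone om
end

section
/- Let A be a λ-lattice with a unary operation ' which is bounded with respect to the induced order (with least element 0 and greatest element 1), and let ⊙ and → denote the Sasaki operations on A defined by x ⊙ y := (x ⊔ y') ⊓ y and x → y := x' ⊔ (x ⊓ y). If ⊙ and → form an adjoint pair with respect to the induced order, then ' is a complementation on A, i.e. x ⊔ x' = 1 and x ⊓ x' = 0 for all x. -/
/-!
Since `y ⊙ x ≤ x` for every `y`, adjointness gives `y ≤ x → x = x' ⊔ x` for every `y`, so
`x' ⊔ x` is the top element. Dually `0 ≤ x → 0`, hence `0 ⊙ x = x' ⊓ x ≤ 0`.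
-/

/-- A λ-lattice: two commutative binary operations satisfying the weak
associativity laws and the absorption laws. -/
structure LambdaLattice (A : Type*) where
  sup : A → A → A
  inf : A → A → A
  sup_comm : ∀ x y, sup x y = sup y x
  inf_comm : ∀ x y, inf x y = inf y x
  sup_assoc : ∀ x y z, sup x (sup (sup x y) z) = sup (sup x y) z
  inf_assoc : ∀ x y z, inf x (inf (inf x y) z) = inf (inf x y) z
  absorb_sup : ∀ x y, sup x (inf x y) = x
  absorb_inf : ∀ x y, inf x (sup x y) = x

/-- The induced order of a λ-lattice: `x ≤ y` iff `x ⊔ y = y`. -/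
def LambdaLattice.le {A : Type*} (L : LambdaLattice A) (x y : A) : Prop :=
  L.sup x y = y

namespace LambdaLattice

variable {A : Type*} (L : LambdaLattice A)

lemma sup_idem (x : A) : L.sup x x = x := by
  simpa only [L.absorb_inf] using L.absorb_sup x (L.sup x x)

lemma inf_idem (x : A) : L.inf x x = x := by
  simpa only [L.sup_idem] using L.absorb_inf x x

lemma le_antisymm {x y : A} (hxy : L.le x y) (hyx : L.le y x) : x = y := by
  calc x = L.sup y x := hyx.symm
    _ = L.sup x y := L.sup_comm y x
    _ = y := hxy

lemma inf_le_right (x y : A) : L.le (L.inf x y) y := by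
  rw [le, L.sup_comm, L.inf_comm]
  exact L.absorb_sup y x

/-- The Sasaki product `x ⊙ y = (x ⊔ y') ⊓ y`, for the unary operation `c` playing `'`. -/
def sasakiProd (c : A → A) (x y : A) : A :=
  L.inf (L.sup x (c y)) y

def sasakiImp (c : A → A) (x y : A) : A :=
  L.sup (c x) (L.inf x y)

def IsSasakiAdjoint (c : A → A) : Prop :=
  ∀ x y z : A, L.le (L.sasakiProd c x y) z ↔ L.le x (L.sasakiImp c y z)

variable {L} {c : A → A}

lemma le_sup_of_isSasakiAdjoint (adj : L.IsSasakiAdjoint c) (x y : A) :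
    L.le y (L.sup (c x) x) := by
  have h := (adj y x x).mp (L.inf_le_right _ x)
  rwa [sasakiImp, L.inf_idem] at h

lemma inf_le_of_isSasakiAdjoint (adj : L.IsSasakiAdjoint c) {b : A} (hb : ∀ y, L.le b y)
    (x : A) : L.le (L.inf (c x) x) b := by
  have h := (adj b x b).mpr (hb _)
  rwa [sasakiProd, hb (c x)] at h

end LambdaLattice

/-- In a λ-lattice with a unary operation `c`, bounded with respect
to the induced order (bottom `b`, top `t`), if the Sasaki operations
`x ⊙ y = (x ⊔ c y) ⊓ y` and `x → y = c x ⊔ (x ⊓ y)` form an adjoint pair with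
respect to the induced order, then `c` is a complementation. -/
theorem sasaki_stmt_13 {A : Type*} (L : LambdaLattice A) (c : A → A) (b t : A)
    (hbot : ∀ x, L.le b x) (htop : ∀ x, L.le x t)
    (adj : ∀ x y z : A, L.le (L.inf (L.sup x (c y)) y) z ↔ L.le x (L.sup (c y) (L.inf y z))) :
    ∀ x : A, L.sup x (c x) = t ∧ L.inf x (c x) = b := by
  have hadj : L.IsSasakiAdjoint c := adj
  intro x
  rw [L.sup_comm, L.inf_comm]
  exact ⟨L.le_antisymm (htop _) (LambdaLattice.le_sup_of_isSasakiAdjoint hadj x t),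
    L.le_antisymm (LambdaLattice.inf_le_of_isSasakiAdjoint hadj hbot x) (hbot _)⟩
end

section
/- Let A be a λ-lattice with a surjective unary operation ' satisfying identities (C1) and (C2), and assume the Sasaki operations x ⊙ y := (x ⊔ y') ⊓ y and x → y := x' ⊔ (x ⊓ y) form an adjoint pair with respect to the induced order. Then ⊔ and ⊓ are monotone with respect to the induced order (for all a,b,c with a ≤ b one has a ⊔ c ≤ b ⊔ c and a ⊓ c ≤ b ⊓ c), and hence A is a lattice: a ⊔ b is the least upper bound and a ⊓ b is the greatest lower bound of a and b with respect to the induced order. -/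
namespace LambdaLattice

variable {A : Type*} (L : LambdaLattice A)

lemma sup_sup_self (x y : A) : L.sup x (L.sup x y) = L.sup x y := by
  simpa only [L.absorb_sup] using L.sup_assoc x y (L.inf (L.sup x y) x)

lemma inf_inf_self (x y : A) : L.inf x (L.inf x y) = L.inf x y := by
  simpa only [L.inf_idem] using L.inf_assoc x y (L.inf x y)

variable {L}

lemma le_trans {x y z : A} (hxy : L.le x y) (hyz : L.le y z) : L.le x z := by
  unfold LambdaLattice.le at *
  calc L.sup x z = L.sup x (L.sup (L.sup x y) z) := by rw [hxy, hyz]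
    _ = z := by rw [L.sup_assoc, hxy, hyz]

lemma inf_eq_left_of_le {x y : A} (h : L.le x y) : L.inf x y = x := by
  rw [← h, L.absorb_inf]

variable (L)

lemma le_sup_left (a b : A) : L.le a (L.sup a b) := L.sup_sup_self a b

lemma le_sup_right (a b : A) : L.le b (L.sup a b) := by
  rw [L.sup_comm a b]
  exact L.le_sup_left b a

lemma inf_le_left (a b : A) : L.le (L.inf a b) a := by
  show L.sup (L.inf a b) a = a
  rw [L.sup_comm, L.absorb_sup]

lemma inf_le_right_s17 (a b : A) : L.le (L.inf a b) b := by
  rw [L.inf_comm]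
  exact L.inf_le_left b a

section Sasaki

variable {L} {c : A → A}
  (adj : ∀ x y z : A, L.le (L.inf (L.sup x (c y)) y) z ↔ L.le x (L.sup (c y) (L.inf y z)))
include adj

lemma inf_le_inf_right (C2 : ∀ x y : A, L.inf (L.sup (c x) (L.inf x y)) x = L.inf x y)
    {a b : A} (h : L.le a b) (d : A) : L.le (L.inf a d) (L.inf b d) := by
  rw [L.inf_comm a, L.inf_comm b]
  have prod_fixed : L.inf (L.sup (L.inf d a) (c d)) d = L.inf d a := by
    rw [L.sup_comm]
    exact C2 d a
  have below_imp : L.le (L.inf d a) (L.sup (c d) (L.inf d b)) :=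
    (adj _ d b).mp (by rw [prod_fixed]; exact le_trans (L.inf_le_right_s17 d a) h)
  have prod_le : L.le (L.inf (L.sup (L.inf d a) (c d)) d) (L.inf d b) :=
    (adj _ d _).mpr (by rwa [L.inf_inf_self])
  rwa [prod_fixed] at prod_le

lemma sup_le_sup_right (hsurj : Function.Surjective c)
    (C1 : ∀ x y : A, L.sup (c y) (L.inf (L.sup x (c y)) y) = L.sup x (c y))
    {a b : A} (h : L.le a b) (d : A) : L.le (L.sup a d) (L.sup b d) := by
  obtain ⟨q, rfl⟩ := hsurj d
  have imp_fixed : L.sup (c q) (L.inf q (L.sup b (c q))) = L.sup b (c q) := by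
    rw [L.inf_comm]
    exact C1 b q
  have prod_le : L.le (L.inf (L.sup a (c q)) q) (L.sup b (c q)) :=
    (adj a q _).mpr (by rw [imp_fixed]; exact le_trans h (L.le_sup_left b _))
  have sup_idem : L.sup (L.sup a (c q)) (c q) = L.sup a (c q) := by
    rw [L.sup_comm _ (c q), L.sup_comm a, L.sup_sup_self]
  have le_imp : L.le (L.sup a (c q)) (L.sup (c q) (L.inf q (L.sup b (c q)))) :=
    (adj _ q _).mp (by rwa [sup_idem])
  rwa [imp_fixed] at le_imp

lemma sup_le (hsurj : Function.Surjective c)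
    (C1 : ∀ x y : A, L.sup (c y) (L.inf (L.sup x (c y)) y) = L.sup x (c y))
    {a b u : A} (ha : L.le a u) (hb : L.le b u) : L.le (L.sup a b) u := by
  have h := sup_le_sup_right adj hsurj C1 ha b
  rwa [L.sup_comm u, hb] at h

lemma le_inf (C2 : ∀ x y : A, L.inf (L.sup (c x) (L.inf x y)) x = L.inf x y)
    {a b u : A} (ha : L.le u a) (hb : L.le u b) : L.le u (L.inf a b) := by
  have h := inf_le_inf_right adj C2 ha b
  rwa [inf_eq_left_of_le hb] at h

end Sasaki

end LambdaLattice

/-- Let `A` be a λ-lattice with a surjective unary operation `c`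
satisfying identities (C1) and (C2) whose Sasaki operations form an adjoint pair
with respect to the induced order. Then `⊔` and `⊓` are monotone with respect
to the induced order, and hence `A` is a lattice: `a ⊔ b` is the least upper
bound and `a ⊓ b` is the greatest lower bound of `a` and `b`. -/
theorem sasaki_stmt_17 {A : Type*} (L : LambdaLattice A) (c : A → A)
    (hsurj : Function.Surjective c)
    (C1 : ∀ x y : A, L.sup (c y) (L.inf (L.sup x (c y)) y) = L.sup x (c y))
    (C2 : ∀ x y : A, L.inf (L.sup (c x) (L.inf x y)) x = L.inf x y)
    (adj : ∀ x y z : A, L.le (L.inf (L.sup x (c y)) y) z ↔ L.le x (L.sup (c y) (L.inf y z))) :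
    (∀ a b c' : A, L.le a b → L.le (L.sup a c') (L.sup b c') ∧ L.le (L.inf a c') (L.inf b c')) ∧
    (∀ a b : A, L.le a (L.sup a b) ∧ L.le b (L.sup a b) ∧
      ∀ u : A, L.le a u → L.le b u → L.le (L.sup a b) u) ∧
    (∀ a b : A, L.le (L.inf a b) a ∧ L.le (L.inf a b) b ∧
      ∀ u : A, L.le u a → L.le u b → L.le u (L.inf a b)) :=
  ⟨fun _ _ d h => ⟨L.sup_le_sup_right adj hsurj C1 h d, L.inf_le_inf_right adj C2 h d⟩,
    fun a b => ⟨L.le_sup_left a b, L.le_sup_right a b, fun _ => L.sup_le adj hsurj C1⟩,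
    fun a b => ⟨L.inf_le_left a b, L.inf_le_right_s17 a b, fun _ => L.le_inf adj C2⟩⟩
end

section
/- Let (S,+,·,0,',≤) be an ordered commutative semiring with a unary operation ' satisfying x·x' = 0 for all x, and let ⊙ and → denote the Sasaki operations on S defined by x ⊙ y := (x + y')·y and x → y := x' + x·y. If S satisfies conditions (3) and (4), then ⊙ and → satisfy condition (A1): for all x,y,z, x ⊙ y ≤ z implies x ≤ y → z. If S satisfies conditions (5) and (6), then ⊙ and → satisfy condition (A2): for all x,y,z, x ≤ y → z implies x ⊙ y ≤ z. Consequently, if S satisfies conditions (3)–(6), then ⊙ and → form an adjoint pair. -/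
/-!
Since `y' · y = 0`, the Sasaki product `x ⊙ y = (x + y') · y` collapses to `x · y`, and
`(y → z) · y` to `z · (y · y)`. Applying the map `y → _` (monotone by (4)) to `x · y ≤ z`
and using (3) gives (A1); multiplying `x ≤ y → z` by `y` (monotone by (5)) and using (6)
gives (A2).
-/

structure OrderedSemiringWithUnary (S : Type*) where
  add : S → S → S
  mul : S → S → S
  zero : S
  compl : S → S
  le : S → S → Prop
  add_comm : ∀ x y, add x y = add y x
  add_assoc : ∀ x y z, add (add x y) z = add x (add y z)
  add_zero : ∀ x, add x zero = x
  mul_comm : ∀ x y, mul x y = mul y x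
  mul_assoc : ∀ x y z, mul (mul x y) z = mul x (mul y z)
  mul_zero : ∀ x, mul x zero = zero
  distrib : ∀ x y z, mul x (add y z) = add (mul x y) (mul x z)
  le_refl : ∀ x, le x x
  le_trans : ∀ x y z, le x y → le y z → le x z
  le_antisymm : ∀ x y, le x y → le y x → x = y
  mul_compl : ∀ x, mul x (compl x) = zero

namespace OrderedSemiringWithUnary

variable {S : Type*} (R : OrderedSemiringWithUnary S)

def sasakiMul (x y : S) : S := R.mul (R.add x (R.compl y)) y

def sasakiImp (x y : S) : S := R.add (R.compl x) (R.mul x y)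

theorem zero_add (x : S) : R.add R.zero x = x := by
  rw [R.add_comm, R.add_zero]

theorem add_mul (x y z : S) : R.mul (R.add x y) z = R.add (R.mul x z) (R.mul y z) := by
  rw [R.mul_comm, R.distrib, R.mul_comm z x, R.mul_comm z y]

theorem compl_mul (x : S) : R.mul (R.compl x) x = R.zero := by
  rw [R.mul_comm, R.mul_compl]

theorem sasakiMul_eq_mul (x y : S) : R.sasakiMul x y = R.mul x y := by
  rw [sasakiMul, add_mul, compl_mul, R.add_zero]

theorem sasakiImp_mul_right (y z : S) : R.mul (R.sasakiImp y z) y = R.mul z (R.mul y y) := by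
  rw [sasakiImp, add_mul, compl_mul, zero_add, R.mul_comm y z, R.mul_assoc]

theorem le_sasakiImp_of_sasakiMul_le
    (h3 : ∀ x y, R.le x (R.add (R.compl y) (R.mul (R.mul x y) y)))
    (h4 : ∀ x y z, R.le x y → R.le (R.sasakiImp z x) (R.sasakiImp z y))
    {x y z : S} (h : R.le (R.sasakiMul x y) z) : R.le x (R.sasakiImp y z) := by
  have hmono := h4 _ _ y h
  rw [sasakiMul_eq_mul, sasakiImp, R.mul_comm y] at hmono
  exact R.le_trans _ _ _ (h3 x y) hmono

theorem sasakiMul_le_of_le_sasakiImp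
    (h5 : ∀ x y z, R.le x y → R.le (R.mul x z) (R.mul y z))
    (h6 : ∀ x y, R.le (R.mul x y) x)
    {x y z : S} (h : R.le x (R.sasakiImp y z)) : R.le (R.sasakiMul x y) z := by
  have hmul := h5 _ _ y h
  rw [sasakiImp_mul_right] at hmul
  rw [sasakiMul_eq_mul]
  exact R.le_trans _ _ _ hmul (h6 z _)

theorem sasakiMul_le_iff_le_sasakiImp
    (h3 : ∀ x y, R.le x (R.add (R.compl y) (R.mul (R.mul x y) y)))
    (h4 : ∀ x y z, R.le x y → R.le (R.sasakiImp z x) (R.sasakiImp z y))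
    (h5 : ∀ x y z, R.le x y → R.le (R.mul x z) (R.mul y z))
    (h6 : ∀ x y, R.le (R.mul x y) x)
    {x y z : S} : R.le (R.sasakiMul x y) z ↔ R.le x (R.sasakiImp y z) :=
  ⟨R.le_sasakiImp_of_sasakiMul_le h3 h4, R.sasakiMul_le_of_le_sasakiImp h5 h6⟩

end OrderedSemiringWithUnary

/-- In an ordered commutative semiring with a unary operation, with
Sasaki operations `x ⊙ y = (x + y')·y` and `x → y = x' + x·y`: conditions (3) and
(4) imply (A1); conditions (5) and (6) imply (A2); consequently conditions
(3)–(6) imply that `⊙` and `→` form an adjoint pair. -/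
theorem sasaki_stmt_18 {S : Type*} (R : OrderedSemiringWithUnary S) :
    -- (3) ∧ (4) → (A1)
    (((∀ x y : S, R.le x (R.add (R.compl y) (R.mul (R.mul x y) y))) ∧
      (∀ x y z : S, R.le x y →
        R.le (R.add (R.compl z) (R.mul z x)) (R.add (R.compl z) (R.mul z y)))) →
      ∀ x y z : S, R.le (R.mul (R.add x (R.compl y)) y) z →
        R.le x (R.add (R.compl y) (R.mul y z))) ∧
    -- (5) ∧ (6) → (A2)
    (((∀ x y z : S, R.le x y → R.le (R.mul x z) (R.mul y z)) ∧
      (∀ x y : S, R.le (R.mul x y) x)) →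
      ∀ x y z : S, R.le x (R.add (R.compl y) (R.mul y z)) →
        R.le (R.mul (R.add x (R.compl y)) y) z) ∧
    -- (3) ∧ (4) ∧ (5) ∧ (6) → adjoint pair
    (((∀ x y : S, R.le x (R.add (R.compl y) (R.mul (R.mul x y) y))) ∧
      (∀ x y z : S, R.le x y →
        R.le (R.add (R.compl z) (R.mul z x)) (R.add (R.compl z) (R.mul z y))) ∧
      (∀ x y z : S, R.le x y → R.le (R.mul x z) (R.mul y z)) ∧
      (∀ x y : S, R.le (R.mul x y) x)) →
      ∀ x y z : S, R.le (R.mul (R.add x (R.compl y)) y) z ↔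
        R.le x (R.add (R.compl y) (R.mul y z))) :=
  ⟨fun ⟨h3, h4⟩ _ _ _ => R.le_sasakiImp_of_sasakiMul_le h3 h4,
    fun ⟨h5, h6⟩ _ _ _ => R.sasakiMul_le_of_le_sasakiImp h5 h6,
    fun ⟨h3, h4, h5, h6⟩ _ _ _ => R.sasakiMul_le_iff_le_sasakiImp h3 h4 h5 h6⟩
end

section
/- Let R be a Boolean ring. Define a unary operation by x' := x + 1 and a relation by x ≤ y iff x·y = x (a partial order on R). Then R, viewed as an ordered semiring with unary operation ', satisfies conditions (3)–(6), and consequently the Sasaki operations x ⊙ y := (x + y')·y and x → y := x' + x·y form an adjoint pair with respect to ≤. -/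
/-! In a Boolean ring, `x * y = x` is the order of the associated Boolean algebra, `x + 1` is the
complement and `z + 1 + z * x` is the implication `zᶜ ⊔ x`; every condition reduces to a ring
identity using `a * a = a` and `a + a = 0`. The Sasaki product `(x + y + 1) * y` collapses to
`x * y`, so the adjunction is the Boolean residuation `x ⊓ y ≤ z ↔ x ≤ yᶜ ⊔ z`. -/

namespace BooleanRing

variable {R : Type*} [BooleanRing R]

theorem mul_add_one_add_mul_mul_self (x y : R) : x * (y + 1 + x * y * y) = x := by
  linear_combination mul_self (x * y) + add_self (x * y)

theorem add_one_add_mul_mul_add_one_add_mul (x y z : R) :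
    (z + 1 + z * x) * (z + 1 + z * y) = z + 1 + z * (x * y) := by
  linear_combination (1 + x + y + x * y) * mul_self z + add_self z + add_self (z * x) +
    add_self (z * y)

theorem mul_mul_mul_self_right (x y z : R) : x * z * (y * z) = x * y * z := by
  rw [mul_mul_mul_comm, mul_self]

theorem mul_mul_self_left (x y : R) : x * y * x = x * y := by
  rw [mul_right_comm, mul_self]

theorem add_add_one_mul_self (x y : R) : (x + (y + 1)) * y = x * y := by
  linear_combination mul_self y + add_self y

theorem mul_add_one_add_mul_eq_self_iff (x y z : R) :
    x * (y + 1 + y * z) = x ↔ x * y * z = x * y := by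
  rw [← add_eq_zero', show x * (y + 1 + y * z) + x = x * y * z + x * y by
    linear_combination add_self x, add_eq_zero']

end BooleanRing

/-- A Boolean ring with `x' := x + 1` and `x ≤ y :↔ x·y = x`
satisfies conditions (3)–(6) of an ordered semiring with a unary operation, and
consequently the Sasaki operations `x ⊙ y = (x + y')·y` and `x → y = x' + x·y`
form an adjoint pair with respect to `≤`. -/
theorem sasaki_stmt_19 {R : Type*} [BooleanRing R] :
    -- (3): x ≤ y' + x·y·y
    (∀ x y : R, x * ((y + 1) + x * y * y) = x) ∧
    -- (4): x ≤ y → z' + z·x ≤ z' + z·y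
    (∀ x y z : R, x * y = x →
      ((z + 1) + z * x) * ((z + 1) + z * y) = (z + 1) + z * x) ∧
    -- (5): x ≤ y → x·z ≤ y·z
    (∀ x y z : R, x * y = x → (x * z) * (y * z) = x * z) ∧
    -- (6): x·y ≤ x
    (∀ x y : R, (x * y) * x = x * y) ∧
    -- adjoint pair: x ⊙ y ≤ z ↔ x ≤ y → z
    (∀ x y z : R, ((x + (y + 1)) * y) * z = (x + (y + 1)) * y ↔
      x * ((y + 1) + y * z) = x) := by
  refine ⟨BooleanRing.mul_add_one_add_mul_mul_self, fun x y z h => ?_, fun x y z h => ?_,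
    BooleanRing.mul_mul_self_left, fun x y z => ?_⟩
  · rw [BooleanRing.add_one_add_mul_mul_add_one_add_mul, h]
  · rw [BooleanRing.mul_mul_mul_self_right, h]
  · rw [BooleanRing.add_add_one_mul_self, BooleanRing.mul_add_one_add_mul_eq_self_iff]
end
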